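/- If φ is a Schwartz function on ℝ^d and v, q : ℝ^d → ℝ are L-periodic with ⟨v²⟩, ⟨q²⟩ < ∞, then ⟨|v·(φ∗q) − φ∗(vq)|⟩ ≤ 2 (∫_{ℝ^d} |φ(y)| dy) ⟨v²⟩^{1/2} ⟨q²⟩^{1/2}, where ⟨f⟩ = L^{−d}∫_{[0,L]^d} f dx. -/

import Mathlib

open MeasureTheory Real Filter
open scoped InnerProductSpace

noncomputable section

abbrev Ed (d : ℕ) := EuclideanSpace ℝ (Fin d)

def box (d : ℕ) (L : ℝ) : Set (Ed d) := {x | ∀ i, x i ∈ Set.Icc (0:ℝ) L}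

def cellAvg (d : ℕ) (L : ℝ) (f : Ed d → ℝ) : ℝ := (L ^ d)⁻¹ * ∫ x in box d L, f x

def IsPer {α : Type*} (d : ℕ) (L : ℝ) (f : Ed d → α) : Prop :=
  ∀ (x : Ed d) (i : Fin d), f (x + L • EuclideanSpace.single i 1) = f x

def conv (d : ℕ) (g f : Ed d → ℝ) (x : Ed d) : ℝ := ∫ y, g y * f (x - y)

def convC (d : ℕ) (g f : Ed d → ℂ) (x : Ed d) : ℂ := ∫ y, g y * f (x - y)

def FT (d : ℕ) (f : Ed d → ℂ) (ξ : Ed d) : ℂ :=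
  (((2 * π) ^ (-(d:ℝ)/2) : ℝ) : ℂ) * ∫ x, f x * Complex.exp (-(Complex.I) * Complex.ofReal ⟪x, ξ⟫_ℝ)

def FTr (d : ℕ) (f : Ed d → ℝ) (ξ : Ed d) : ℂ := FT d (fun x => (f x : ℂ)) ξ

def FTinv (d : ℕ) (f : Ed d → ℂ) (x : Ed d) : ℂ :=
  (((2 * π) ^ (-(d:ℝ)/2) : ℝ) : ℂ) * ∫ ξ, f ξ * Complex.exp (Complex.I * Complex.ofReal ⟪ξ, x⟫_ℝ)

def mvec (d : ℕ) (L : ℝ) (k : Fin d → ℤ) : Ed d := WithLp.toLp 2 (fun i => (2 * π / L) * (k i : ℝ))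

def fc (d : ℕ) (L : ℝ) (f : Ed d → ℂ) (k : Fin d → ℤ) : ℂ :=
  (((L ^ d)⁻¹ : ℝ) : ℂ) * ∫ x in box d L, f x * Complex.exp (-(Complex.I) * Complex.ofReal ((2 * π / L) * ∑ i, (k i : ℝ) * x i))

def fcR (d : ℕ) (L : ℝ) (f : Ed d → ℝ) (k : Fin d → ℤ) : ℂ := fc d L (fun x => (f x : ℂ)) k

def lap {F : Type*} [NormedAddCommGroup F] [NormedSpace ℝ F] (d : ℕ) (f : Ed d → F) (x : Ed d) : F :=
  ∑ i, iteratedDeriv 2 (fun t : ℝ => f (x + t • EuclideanSpace.single i 1)) 0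

/-!
Pointwise, `|v(x)(φ∗q)(x) − (φ∗(vq))(x)| ≤ ∫ |φ(y)| (|v(x)| + |v(x−y)|) |q(x−y)| dy`.
Integrate over the cell and exchange the integrals: for each fixed `y`, periodicity makes cell
integrals invariant under the shift `x ↦ x − y`, so by Cauchy–Schwarz each of the two terms
contributes at most `‖v‖_{L²(cell)} ‖q‖_{L²(cell)}`. The shift invariance, and the a.e.
measurability of `|v|` and `|q|` on all of `ℝᵈ`, come from viewing the cell as a fundamental domain
(up to a null set) of the lattice `L ℤᵈ`. The estimate is carried out in `ℝ≥0∞`, where no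
integrability needs to be checked.
-/

open Set Submodule
open scoped Pointwise ENNReal

namespace MeasureTheory.IsAddFundamentalDomain

variable {G E : Type*} [AddGroup G] [AddAction G E] [MeasurableSpace E] [MeasurableConstVAdd G E]
  [Countable G] {μ : Measure E} [VAddInvariantMeasure G E μ] {s : Set E}

theorem aestronglyMeasurable_of_restrict {β : Type*} [TopologicalSpace β]
    [TopologicalSpace.PseudoMetrizableSpace β]
    (hs : IsAddFundamentalDomain G s μ) {f : E → β} (hf : ∀ (g : G) x, f (g +ᵥ x) = f x)
    (h : AEStronglyMeasurable f (μ.restrict s)) : AEStronglyMeasurable f μ := by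
  rw [← hs.sum_restrict]
  exact aestronglyMeasurable_sum_measure_iff.2 fun g =>
    ((hs.vadd g).aestronglyMeasurable_on_iff hs hf).2 h

end MeasureTheory.IsAddFundamentalDomain

theorem MeasureTheory.IsAddFundamentalDomain.setLIntegral_comp_sub_right {E : Type*}
    [AddCommGroup E] [MeasurableSpace E] [MeasurableAdd E] {μ : Measure E} [μ.IsAddLeftInvariant]
    {G : AddSubgroup E} [Countable G] {s : Set E} (hs : IsAddFundamentalDomain G s μ)
    {f : E → ℝ≥0∞} (hf : ∀ g ∈ G, ∀ x, f (g + x) = f x) (y : E) :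
    ∫⁻ x in s, f (x - y) ∂μ = ∫⁻ x in s, f x ∂μ := by
  have hsub : (fun x => x - y) ⁻¹' ((-y) +ᵥ s) = s := by
    ext x; simp [Set.mem_vadd_set_iff_neg_vadd_mem, sub_eq_add_neg]
  calc ∫⁻ x in s, f (x - y) ∂μ = ∫⁻ x in (-y) +ᵥ s, f x ∂μ := by
        conv_lhs => rw [← hsub]
        exact (measurePreserving_sub_right μ y).setLIntegral_comp_preimage_emb
          (MeasurableEquiv.subRight y).measurableEmbedding _ _
    _ = ∫⁻ x in s, f x ∂μ :=
        (hs.vadd_of_comm (-y)).setLIntegral_eq hs f fun g x => hf g g.2 x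

theorem MeasureTheory.Integrable.lintegral_enorm_rpow_two {α : Type*} [MeasurableSpace α]
    {μ : Measure α} {f : α → ℝ} (hf : Integrable (fun x => f x ^ 2) μ) :
    ∫⁻ x, ‖f x‖ₑ ^ (2 : ℝ) ∂μ = ENNReal.ofReal (∫ x, f x ^ 2 ∂μ) := by
  rw [ofReal_integral_eq_lintegral_ofReal hf (ae_of_all _ fun x => sq_nonneg (f x))]
  refine lintegral_congr fun x => ?_
  rw [Real.enorm_eq_ofReal_abs, ENNReal.rpow_two, ← ENNReal.ofReal_pow (abs_nonneg _), sq_abs]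

theorem ENNReal.ofReal_rpow_one_half {a : ℝ} (ha : 0 ≤ a) :
    ENNReal.ofReal a ^ (1 / 2 : ℝ) = ENNReal.ofReal √a := by
  rw [ENNReal.ofReal_rpow_of_nonneg ha (by norm_num), Real.sqrt_eq_rpow]

section Periodic

variable {d : ℕ} {L : ℝ}

def cellBasis (d : ℕ) (L : ℝ) (hL : 0 < L) : Module.Basis (Fin d) ℝ (Ed d) :=
  (EuclideanSpace.basisFun (Fin d) ℝ).toBasis.unitsSMul fun _ => Units.mk0 L hL.ne'

theorem cellBasis_apply (hL : 0 < L) (i : Fin d) :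
    cellBasis d L hL i = L • EuclideanSpace.single i 1 := by
  simp [cellBasis, Module.Basis.unitsSMul_apply]

theorem cellBasis_repr (hL : 0 < L) (x : Ed d) (i : Fin d) :
    (cellBasis d L hL).repr x i = L⁻¹ * x i := by
  simp [cellBasis, Module.Basis.repr_unitsSMul, Units.smul_def]

def cellLattice (d : ℕ) (L : ℝ) (hL : 0 < L) : AddSubgroup (Ed d) :=
  (span ℤ (range (cellBasis d L hL))).toAddSubgroup

instance (hL : 0 < L) : Countable (cellLattice d L hL) :=
  inferInstanceAs (Countable (span ℤ (range (cellBasis d L hL))))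

theorem isAddFundamentalDomain_cellLattice (hL : 0 < L) :
    IsAddFundamentalDomain (cellLattice d L hL) (ZSpan.fundamentalDomain (cellBasis d L hL)) :=
  ZSpan.isAddFundamentalDomain' _ _

theorem fundamentalDomain_cellBasis (hL : 0 < L) :
    ZSpan.fundamentalDomain (cellBasis d L hL) = {x : Ed d | ∀ i, x i ∈ Ico 0 L} := by
  ext x
  simp only [ZSpan.mem_fundamentalDomain, cellBasis_repr, mem_Ico, mem_ofPred_eq, inv_mul_eq_div,
    le_div_iff₀ hL, zero_mul, div_lt_one hL]

theorem box_ae_eq_fundamentalDomain (hL : 0 < L) :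
    box d L =ᵐ[volume] ZSpan.fundamentalDomain (cellBasis d L hL) := by
  have hIcc : box d L = WithLp.ofLp ⁻¹' univ.pi fun _ => Icc 0 L := by
    ext; simp only [box, mem_preimage, mem_univ_pi, mem_ofPred_eq]
  have hIco : ZSpan.fundamentalDomain (cellBasis d L hL) =
      WithLp.ofLp ⁻¹' univ.pi fun _ => Ico 0 L := by
    rw [fundamentalDomain_cellBasis]; ext; simp only [mem_preimage, mem_univ_pi, mem_ofPred_eq]
  rw [hIcc, hIco]
  exact (PiLp.volume_preserving_ofLp (Fin d)).quasiMeasurePreserving.preimage_ae_eq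
    Measure.pi_Ico_ae_eq_pi_Icc.symm

theorem IsPer.apply_add_of_mem {α : Type*} {hL : 0 < L} {f : Ed d → α} (hf : IsPer d L f)
    {g : Ed d} (hg : g ∈ cellLattice d L hL) (x : Ed d) : f (g + x) = f x := by
  let periods : AddSubgroup (Ed d) :=
    { carrier := {g | ∀ x, f (g + x) = f x}
      zero_mem' := by simp
      add_mem' := fun hu hv x => by rw [add_assoc, hu, hv]
      neg_mem' := fun {v} hv x => by simpa using (hv (-v + x)).symm }
  have hle : span ℤ (range (cellBasis d L hL)) ≤ periods.toIntSubmodule := by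
    rw [span_le]
    rintro _ ⟨i, rfl⟩ x
    rw [cellBasis_apply, add_comm]
    exact hf x i
  exact hle hg x

theorem IsPer.setLIntegral_box_comp_sub (hL : 0 < L) {f : Ed d → ℝ≥0∞} (hf : IsPer d L f)
    (y : Ed d) : ∫⁻ x in box d L, f (x - y) = ∫⁻ x in box d L, f x := by
  rw [Measure.restrict_congr_set (box_ae_eq_fundamentalDomain hL)]
  exact (isAddFundamentalDomain_cellLattice hL).setLIntegral_comp_sub_right
    (fun _ hg => hf.apply_add_of_mem hg) y

theorem IsPer.aestronglyMeasurable {β : Type*} [TopologicalSpace β]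
    [TopologicalSpace.PseudoMetrizableSpace β] (hL : 0 < L) {f : Ed d → β} (hf : IsPer d L f)
    (h : AEStronglyMeasurable f (volume.restrict (box d L))) : AEStronglyMeasurable f volume := by
  rw [Measure.restrict_congr_set (box_ae_eq_fundamentalDomain hL)] at h
  exact (isAddFundamentalDomain_cellLattice hL).aestronglyMeasurable_of_restrict
    (fun g => hf.apply_add_of_mem g.2) h

theorem IsPer.aemeasurable_enorm_of_integrableOn_sq (hL : 0 < L) {f : Ed d → ℝ}
    (hf : IsPer d L f) (hf2 : IntegrableOn (fun x => f x ^ 2) (box d L)) :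
    AEMeasurable (fun x => ‖f x‖ₑ) := by
  -- only `|f|`, not `f`, is determined by `f ^ 2`
  have habs : AEStronglyMeasurable (fun x => |f x|) (volume.restrict (box d L)) := by
    simpa only [Real.sqrt_sq_eq_abs] using
      Real.continuous_sqrt.comp_aestronglyMeasurable hf2.aestronglyMeasurable
  have hper : IsPer d L (fun x => |f x|) := fun x i => by simp only [hf x i]
  simpa only [enorm_abs] using (hper.aestronglyMeasurable hL habs).enorm

theorem IsPer.setLIntegral_box_add_mul_comp_sub_le (hL : 0 < L) {v q : Ed d → ℝ≥0∞}
    (hvper : IsPer d L v) (hqper : IsPer d L q) (hv : AEMeasurable v) (hq : AEMeasurable q)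
    (y : Ed d) :
    ∫⁻ x in box d L, (v x + v (x - y)) * q (x - y) ≤
      2 * ((∫⁻ x in box d L, v x ^ (2 : ℝ)) ^ (1 / 2 : ℝ) *
        (∫⁻ x in box d L, q x ^ (2 : ℝ)) ^ (1 / 2 : ℝ)) := by
  have hshift {g : Ed d → ℝ≥0∞} (hg : AEMeasurable g) :
      AEMeasurable (fun x => g (x - y)) (volume.restrict (box d L)) :=
    (hg.comp_quasiMeasurePreserving
      (measurePreserving_sub_right volume y).quasiMeasurePreserving).restrict
  have cauchySchwarz {a b : Ed d → ℝ≥0∞} (ha : AEMeasurable a (volume.restrict (box d L)))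
      (hb : AEMeasurable b (volume.restrict (box d L))) :=
    ENNReal.lintegral_mul_le_Lp_mul_Lq _ Real.HolderConjugate.two_two ha hb
  have hqy : ∫⁻ x in box d L, q (x - y) ^ (2 : ℝ) = ∫⁻ x in box d L, q x ^ (2 : ℝ) :=
    IsPer.setLIntegral_box_comp_sub hL (f := fun x => q x ^ (2 : ℝ))
      (fun x i => by simp only [hqper x i]) y
  have hvqy : ∫⁻ x in box d L, v (x - y) * q (x - y) = ∫⁻ x in box d L, v x * q x :=
    IsPer.setLIntegral_box_comp_sub hL (f := fun x => v x * q x)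
      (fun x i => by simp only [hvper x i, hqper x i]) y
  simp only [add_mul]
  rw [lintegral_add_left' (hv.restrict.fun_mul (hshift hq)), hvqy, two_mul]
  gcongr
  · simpa only [one_div, Pi.mul_apply, hqy] using cauchySchwarz hv.restrict (hshift hq)
  · simpa only [one_div, Pi.mul_apply] using cauchySchwarz hv.restrict hq.restrict

theorem enorm_commutator_conv_le (φ v q : Ed d → ℝ) (x : Ed d) :
    ‖v x * conv d φ q x - conv d φ (fun y => v y * q y) x‖ₑ ≤
      ∫⁻ y, ‖φ y‖ₑ * ((‖v x‖ₑ + ‖v (x - y)‖ₑ) * ‖q (x - y)‖ₑ) := by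
  have hq : ‖conv d φ q x‖ₑ ≤ ∫⁻ y, ‖φ y‖ₑ * ‖q (x - y)‖ₑ :=
    (enorm_integral_le_lintegral_enorm _).trans_eq (by simp only [enorm_mul])
  have hvq : ‖conv d φ (fun y => v y * q y) x‖ₑ ≤
      ∫⁻ y, ‖φ y‖ₑ * (‖v (x - y)‖ₑ * ‖q (x - y)‖ₑ) :=
    (enorm_integral_le_lintegral_enorm _).trans_eq (by simp only [enorm_mul])
  calc ‖v x * conv d φ q x - conv d φ (fun y => v y * q y) x‖ₑ
      ≤ ‖v x‖ₑ * ‖conv d φ q x‖ₑ + ‖conv d φ (fun y => v y * q y) x‖ₑ :=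
        enorm_sub_le.trans_eq (by rw [enorm_mul])
    _ ≤ ‖v x‖ₑ * (∫⁻ y, ‖φ y‖ₑ * ‖q (x - y)‖ₑ) +
          ∫⁻ y, ‖φ y‖ₑ * (‖v (x - y)‖ₑ * ‖q (x - y)‖ₑ) := by
        gcongr
    _ ≤ ∫⁻ y, ‖φ y‖ₑ * ((‖v x‖ₑ + ‖v (x - y)‖ₑ) * ‖q (x - y)‖ₑ) := by
        rw [← lintegral_const_mul' _ _ enorm_ne_top]
        exact (le_lintegral_add _ _).trans_eq (lintegral_congr fun y => by ring)

theorem IsPer.setLIntegral_box_enorm_commutator_le (hL : 0 < L) {φ v q : Ed d → ℝ}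
    (hφ : AEMeasurable fun y => ‖φ y‖ₑ) (hvper : IsPer d L v) (hqper : IsPer d L q)
    (hv : AEMeasurable fun x => ‖v x‖ₑ) (hq : AEMeasurable fun x => ‖q x‖ₑ) :
    ∫⁻ x in box d L, ‖v x * conv d φ q x - conv d φ (fun y => v y * q y) x‖ₑ ≤
      (∫⁻ y, ‖φ y‖ₑ) * (2 * ((∫⁻ x in box d L, ‖v x‖ₑ ^ (2 : ℝ)) ^ (1 / 2 : ℝ) *
        (∫⁻ x in box d L, ‖q x‖ₑ ^ (2 : ℝ)) ^ (1 / 2 : ℝ))) := by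
  have hsub : Measure.QuasiMeasurePreserving (fun p : Ed d × Ed d => p.1 - p.2)
      ((volume.restrict (box d L)).prod volume) volume :=
    (quasiMeasurePreserving_sub_of_right_invariant volume volume).mono
      (Measure.restrict_le_self.absolutelyContinuous.prod .rfl) .rfl
  have hmeas : AEMeasurable (fun p : Ed d × Ed d =>
      ‖φ p.2‖ₑ * ((‖v p.1‖ₑ + ‖v (p.1 - p.2)‖ₑ) * ‖q (p.1 - p.2)‖ₑ))
      ((volume.restrict (box d L)).prod volume) :=
    (hφ.comp_quasiMeasurePreserving Measure.quasiMeasurePreserving_snd).mul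
      (((hv.restrict.comp_quasiMeasurePreserving Measure.quasiMeasurePreserving_fst).add
        (hv.comp_quasiMeasurePreserving hsub)).mul (hq.comp_quasiMeasurePreserving hsub))
  calc ∫⁻ x in box d L, ‖v x * conv d φ q x - conv d φ (fun y => v y * q y) x‖ₑ
      ≤ ∫⁻ x in box d L, ∫⁻ y, ‖φ y‖ₑ * ((‖v x‖ₑ + ‖v (x - y)‖ₑ) * ‖q (x - y)‖ₑ) :=
        lintegral_mono fun x => enorm_commutator_conv_le φ v q x
    _ = ∫⁻ y, ‖φ y‖ₑ * ∫⁻ x in box d L, (‖v x‖ₑ + ‖v (x - y)‖ₑ) * ‖q (x - y)‖ₑ := by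
        rw [lintegral_lintegral_swap hmeas]
        exact lintegral_congr fun y => lintegral_const_mul' _ _ enorm_ne_top
    _ ≤ ∫⁻ y, ‖φ y‖ₑ * (2 * ((∫⁻ x in box d L, ‖v x‖ₑ ^ (2 : ℝ)) ^ (1 / 2 : ℝ) *
        (∫⁻ x in box d L, ‖q x‖ₑ ^ (2 : ℝ)) ^ (1 / 2 : ℝ))) := by
        gcongr with y
        exact IsPer.setLIntegral_box_add_mul_comp_sub_le hL
          (fun x i => by simp only [hvper x i]) (fun x i => by simp only [hqper x i]) hv hq y
    _ = _ := lintegral_mul_const'' _ hφ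

theorem integral_box_abs_commutator_le (hL : 0 < L) (φ : SchwartzMap (Ed d) ℝ)
    {v q : Ed d → ℝ} (hvper : IsPer d L v) (hqper : IsPer d L q)
    (hv2 : IntegrableOn (fun x => v x ^ 2) (box d L))
    (hq2 : IntegrableOn (fun x => q x ^ 2) (box d L)) :
    ∫ x in box d L, |v x * conv d φ q x - conv d φ (fun y => v y * q y) x| ≤
      2 * (∫ y, |φ y|) * √(∫ x in box d L, v x ^ 2) * √(∫ x in box d L, q x ^ 2) := by
  set F := fun x => v x * conv d φ q x - conv d φ (fun y => v y * q y) x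
  have hIv : 0 ≤ ∫ x in box d L, v x ^ 2 := integral_nonneg fun x => sq_nonneg (v x)
  have hIq : 0 ≤ ∫ x in box d L, q x ^ 2 := integral_nonneg fun x => sq_nonneg (q x)
  have hbound := hvper.setLIntegral_box_enorm_commutator_le hL φ.continuous.enorm.aemeasurable
    hqper (hvper.aemeasurable_enorm_of_integrableOn_sq hL hv2)
    (hqper.aemeasurable_enorm_of_integrableOn_sq hL hq2)
  rw [hv2.lintegral_enorm_rpow_two, hq2.lintegral_enorm_rpow_two,
    ENNReal.ofReal_rpow_one_half hIv, ENNReal.ofReal_rpow_one_half hIq,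
    ← ofReal_integral_norm_eq_lintegral_enorm φ.integrable] at hbound
  have hrhs : ENNReal.ofReal (∫ y, ‖φ y‖) *
      (2 * (ENNReal.ofReal √(∫ x in box d L, v x ^ 2) *
        ENNReal.ofReal √(∫ x in box d L, q x ^ 2)))
      = ENNReal.ofReal (2 * (∫ y, |φ y|) * √(∫ x in box d L, v x ^ 2) *
          √(∫ x in box d L, q x ^ 2)) := by
    simp only [Real.norm_eq_abs]
    rw [ENNReal.ofReal_mul (by positivity), ENNReal.ofReal_mul (by positivity),
      ENNReal.ofReal_mul (by positivity), ENNReal.ofReal_ofNat]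
    ring
  calc ∫ x in box d L, |F x| ≤ (∫⁻ x in box d L, ‖F x‖ₑ).toReal := by
        refine (Real.le_norm_self _).trans ((norm_integral_le_lintegral_norm _).trans_eq ?_)
        simp only [Real.norm_eq_abs, abs_abs, Real.enorm_eq_ofReal_abs]
    _ ≤ _ := ENNReal.toReal_le_of_le_ofReal (by positivity) (hbound.trans_eq hrhs)

end Periodic

/-- Lemma 2, case s = 0: commutator estimate with constant 2 for $L^2$ periodic
functions $v$ and $q$. -/
theorem stmt1 (d : ℕ) (L : ℝ) (hL : 0 < L) (φ : SchwartzMap (Ed d) ℝ)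
    (v q : Ed d → ℝ) (hvper : IsPer d L v) (hqper : IsPer d L q)
    (hv2 : IntegrableOn (fun x => (v x) ^ 2) (box d L))
    (hq2 : IntegrableOn (fun x => (q x) ^ 2) (box d L)) :
    cellAvg d L (fun x => |v x * conv d (⇑φ) q x - conv d (⇑φ) (fun y => v y * q y) x|)
      ≤ 2 * (∫ y, |φ y|) *
          Real.sqrt (cellAvg d L (fun x => (v x) ^ 2)) *
          Real.sqrt (cellAvg d L (fun x => (q x) ^ 2)) := by
  have hc : 0 ≤ (L ^ d)⁻¹ := by positivity
  have key := integral_box_abs_commutator_le hL φ hvper hqper hv2 hq2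
  simp only [cellAvg, Real.sqrt_mul hc]
  calc (L ^ d)⁻¹ * ∫ x in box d L, |v x * conv d φ q x - conv d φ (fun y => v y * q y) x|
      ≤ (L ^ d)⁻¹ * (2 * (∫ y, |φ y|) * √(∫ x in box d L, v x ^ 2) *
          √(∫ x in box d L, q x ^ 2)) := mul_le_mul_of_nonneg_left key hc
    _ = _ := by linear_combination (2 * (∫ y, |φ y|) * √(∫ x in box d L, v x ^ 2) *
          √(∫ x in box d L, q x ^ 2)) * (Real.mul_self_sqrt hc).symm
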